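/- Let h > 0 and Δt ≥ (5/48)·h². Let u, w be grid functions satisfying, for all i,j, the backward Euler fourth-order compact scheme for the heat equation: (1/144)·[w_{i−1,j−1} + 10w_{i,j−1} + w_{i+1,j−1} + 10w_{i−1,j} + 100w_{i,j} + 10w_{i+1,j} + w_{i−1,j+1} + 10w_{i,j+1} + w_{i+1,j+1}] − (Δt/(6h²))·[w_{i−1,j−1} + 4w_{i,j−1} + w_{i+1,j−1} + 4w_{i−1,j} − 20w_{i,j} + 4w_{i+1,j} + w_{i−1,j+1} + 4w_{i,j+1} + w_{i+1,j+1}] = (1/144)·[u_{i−1,j−1} + 10u_{i,j−1} + u_{i+1,j−1} + 10u_{i−1,j} + 100u_{i,j} + 10u_{i+1,j} + u_{i−1,j+1} + 10u_{i,j+1} + u_{i+1,j+1}]. Then w satisfies the discrete maximum principle: min_{i,j} u_{i,j} ≤ w_{i,j} ≤ max_{i,j} u_{i,j} for all i,j. -/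
import Mathlib

noncomputable section

/-- Grid functions with periodic indexing. -/
abbrev Grid (Nx Ny : ℕ) : Type := ZMod Nx × ZMod Ny → ℝ

variable {Nx Ny : ℕ}

/-- The compact-weighting nine-point stencil
`S₁(f)_{i,j} = f_{i−1,j−1} + 10f_{i,j−1} + f_{i+1,j−1} + 10f_{i−1,j} + 100f_{i,j}
 + 10f_{i+1,j} + f_{i−1,j+1} + 10f_{i,j+1} + f_{i+1,j+1}`. -/
def S1 (f : Grid Nx Ny) : Grid Nx Ny := fun p =>
  f (p.1 - 1, p.2 - 1) + 10 * f (p.1, p.2 - 1) + f (p.1 + 1, p.2 - 1)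
    + 10 * f (p.1 - 1, p.2) + 100 * f p + 10 * f (p.1 + 1, p.2)
    + f (p.1 - 1, p.2 + 1) + 10 * f (p.1, p.2 + 1) + f (p.1 + 1, p.2 + 1)

/-- The discrete-Laplacian nine-point stencil
`S₂(f)_{i,j} = f_{i−1,j−1} + 4f_{i,j−1} + f_{i+1,j−1} + 4f_{i−1,j} − 20f_{i,j}
 + 4f_{i+1,j} + f_{i−1,j+1} + 4f_{i,j+1} + f_{i+1,j+1}`. -/
def S2 (f : Grid Nx Ny) : Grid Nx Ny := fun p =>
  f (p.1 - 1, p.2 - 1) + 4 * f (p.1, p.2 - 1) + f (p.1 + 1, p.2 - 1)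
    + 4 * f (p.1 - 1, p.2) - 20 * f p + 4 * f (p.1 + 1, p.2)
    + f (p.1 - 1, p.2 + 1) + 4 * f (p.1, p.2 + 1) + f (p.1 + 1, p.2 + 1)

/-- Maximum of a grid function over all grid points. -/
def gridSup [NeZero Nx] [NeZero Ny] (f : Grid Nx Ny) : ℝ :=
  Finset.univ.sup' ⟨((0 : ZMod Nx), (0 : ZMod Ny)), Finset.mem_univ _⟩ f

/-- Minimum of a grid function over all grid points. -/
def gridInf [NeZero Nx] [NeZero Ny] (f : Grid Nx Ny) : ℝ :=
  Finset.univ.inf' ⟨((0 : ZMod Nx), (0 : ZMod Ny)), Finset.mem_univ _⟩ f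

/-- Auxiliary upper bound: if the scheme holds with coefficient `a ≥ 5/288`,
then `w ≤ max u` pointwise. -/
lemma aux_upper [NeZero Nx] [NeZero Ny] (a : ℝ) (ha : 5 / 288 ≤ a)
    (u w : Grid Nx Ny)
    (hs : ∀ p, (1 / 144) * S1 w p - a * S2 w p = (1 / 144) * S1 u p) :
    ∀ p, w p ≤ gridSup u := by
  obtain ⟨p₀, -, hmax⟩ := Finset.exists_max_image (Finset.univ : Finset (ZMod Nx × ZMod Ny)) w
    ⟨((0 : ZMod Nx), (0 : ZMod Ny)), Finset.mem_univ _⟩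
  intro p
  have hp : w p ≤ w p₀ := hmax p (Finset.mem_univ p)
  have hstep : w p₀ ≤ gridSup u := by
    have hsp := hs p₀
    simp only [S1, S2] at hsp
    have hu : ∀ q : ZMod Nx × ZMod Ny, u q ≤ gridSup u := fun q =>
      Finset.le_sup' u (Finset.mem_univ q)
    have hw : ∀ q : ZMod Nx × ZMod Ny, w q ≤ w p₀ := fun q => hmax q (Finset.mem_univ q)
    have e1 := mul_nonneg (by linarith : (0:ℝ) ≤ 4*a - 10/144) (by linarith [hw (p₀.1, p₀.2 - 1)] : (0:ℝ) ≤ w p₀ - w (p₀.1, p₀.2 - 1))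
    have e2 := mul_nonneg (by linarith : (0:ℝ) ≤ 4*a - 10/144) (by linarith [hw (p₀.1 - 1, p₀.2)] : (0:ℝ) ≤ w p₀ - w (p₀.1 - 1, p₀.2))
    have e3 := mul_nonneg (by linarith : (0:ℝ) ≤ 4*a - 10/144) (by linarith [hw (p₀.1 + 1, p₀.2)] : (0:ℝ) ≤ w p₀ - w (p₀.1 + 1, p₀.2))
    have e4 := mul_nonneg (by linarith : (0:ℝ) ≤ 4*a - 10/144) (by linarith [hw (p₀.1, p₀.2 + 1)] : (0:ℝ) ≤ w p₀ - w (p₀.1, p₀.2 + 1))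
    have c1 := mul_nonneg (by linarith : (0:ℝ) ≤ a - 1/144) (by linarith [hw (p₀.1 - 1, p₀.2 - 1)] : (0:ℝ) ≤ w p₀ - w (p₀.1 - 1, p₀.2 - 1))
    have c2 := mul_nonneg (by linarith : (0:ℝ) ≤ a - 1/144) (by linarith [hw (p₀.1 + 1, p₀.2 - 1)] : (0:ℝ) ≤ w p₀ - w (p₀.1 + 1, p₀.2 - 1))
    have c3 := mul_nonneg (by linarith : (0:ℝ) ≤ a - 1/144) (by linarith [hw (p₀.1 - 1, p₀.2 + 1)] : (0:ℝ) ≤ w p₀ - w (p₀.1 - 1, p₀.2 + 1))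
    have c4 := mul_nonneg (by linarith : (0:ℝ) ≤ a - 1/144) (by linarith [hw (p₀.1 + 1, p₀.2 + 1)] : (0:ℝ) ≤ w p₀ - w (p₀.1 + 1, p₀.2 + 1))
    nlinarith [hu (p₀.1 - 1, p₀.2 - 1), hu (p₀.1, p₀.2 - 1), hu (p₀.1 + 1, p₀.2 - 1),
      hu (p₀.1 - 1, p₀.2), hu p₀, hu (p₀.1 + 1, p₀.2),
      hu (p₀.1 - 1, p₀.2 + 1), hu (p₀.1, p₀.2 + 1), hu (p₀.1 + 1, p₀.2 + 1)]
  linarith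

/-- Discrete maximum principle for the backward Euler fourth-order compact
finite difference scheme for the heat equation `u_t = u_{xx} + u_{yy}` on a
uniform periodic grid with `Δx = Δy = h`, provided `Δt ≥ (5/48)h²`. -/
theorem backward_euler_max_principle {Nx Ny : ℕ} [NeZero Nx] [NeZero Ny]
    (hNx : 5 ≤ Nx) (hNy : 5 ≤ Ny)
    (h dt : ℝ) (hh : 0 < h) (hdt : 5 / 48 * h ^ 2 ≤ dt)
    (u w : Grid Nx Ny)
    (hscheme : ∀ p, (1 / 144) * S1 w p - (dt / (6 * h ^ 2)) * S2 w p
      = (1 / 144) * S1 u p) :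
    ∀ p, gridInf u ≤ w p ∧ w p ≤ gridSup u := by
  have h2 : (0:ℝ) < 6 * h ^ 2 := by positivity
  set a : ℝ := dt / (6 * h ^ 2) with ha_def
  have ha : 5 / 288 ≤ a := by
    rw [ha_def, le_div_iff₀ h2]
    nlinarith
  have hupper := aux_upper a ha u w hscheme
  have hs' : ∀ p, (1 / 144) * S1 (fun q => -w q) p - a * S2 (fun q => -w q) p
      = (1 / 144) * S1 (fun q => -u q) p := by
    intro p
    have := hscheme p
    simp only [S1, S2] at this ⊢
    linarith
  have hlower := aux_upper a ha (fun q => -u q) (fun q => -w q) hs'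
  have hneg : gridSup (fun q => -u q) = -gridInf u := by
    unfold gridSup gridInf
    apply le_antisymm
    · apply Finset.sup'_le
      intro b _
      simp only [neg_le_neg_iff]
      exact Finset.inf'_le u (Finset.mem_univ b)
    · rw [neg_le]
      apply Finset.le_inf'
      intro b _
      rw [neg_le]
      exact Finset.le_sup' (fun q => -u q) (Finset.mem_univ b)
  intro p
  refine ⟨?_, hupper p⟩
  have h3 : -w p ≤ -gridInf u := by have := hlower p; rwa [hneg] at this
  linarith
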